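/- arXiv:2107.04293 — 2 statements merged into one kernel-verified Lean document; each statement's English description precedes it below -/
import Mathlib

section
/- If A is a Hausdorff topological space that is a union of N discrete sets, then the Cantor–Bendixson rank of A is at most N. -/
open Ordinal

/-- The Cantor–Bendixson derivative: the set of non-isolated points of `s`
(in the subspace topology). -/
def cbDeriv {X : Type u} [TopologicalSpace X] (s : Set X) : Set X :=
  {x | x ∈ s ∧ x ∈ closure (s \ {x})}

/-- Iterated Cantor–Bendixson derivatives of `A`, indexed by ordinals. -/
noncomputable def cbIter {X : Type u} [TopologicalSpace X] (A : Set X) (o : Ordinal.{u}) :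
    Set X :=
  Ordinal.limitRecOn o A (fun _ ih => cbDeriv ih)
    (fun o _ ih => ⋂ p : {b : Ordinal.{u} // b < o}, ih p.1 p.2)

/-- A set `D` is discrete (in the subspace topology) iff each of its points is isolated
in it. -/
def IsDiscreteSubset {X : Type u} [TopologicalSpace X] (D : Set X) : Prop :=
  ∀ x ∈ D, x ∉ closure (D \ {x})

lemma cbIter_zero {X : Type u} [TopologicalSpace X] (A : Set X) : cbIter A 0 = A :=
  Ordinal.limitRecOn_zero _ _ _

lemma cbIter_succ_nat {X : Type u} [TopologicalSpace X] (A : Set X) (n : ℕ) :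
    cbIter A ((n + 1 : ℕ) : Ordinal.{u}) = cbDeriv (cbIter A (n : Ordinal.{u})) := by
  have : ((n + 1 : ℕ) : Ordinal.{u}) = Order.succ (n : Ordinal.{u}) := by
    rw [Nat.cast_succ, Order.succ_eq_add_one]
  rw [this]
  exact Ordinal.limitRecOn_succ _ _ _ _

/-- T1 propagation: if `x` is in the closure of `E`, `x ∉ E`, and every point `y` of `E`
is in the closure of `D \ {y}`, then `x` is in the closure of `D \ {x}`. -/
lemma closure_trans_aux {X : Type u} [TopologicalSpace X] [T1Space X]
    {x : X} {E D : Set X} (hxE : x ∉ E) (hx : x ∈ closure E)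
    (hE : ∀ y ∈ E, y ∈ closure (D \ {y})) : x ∈ closure (D \ {x}) := by
  rw [mem_closure_iff] at hx ⊢
  intro U hU hxU
  obtain ⟨y, hyU, hyE⟩ := hx U hU hxU
  have hyx : y ≠ x := fun h => hxE (h ▸ hyE)
  have hV : IsOpen (U ∩ {x}ᶜ) := hU.inter isOpen_compl_singleton
  have hyV : y ∈ U ∩ {x}ᶜ := ⟨hyU, hyx⟩
  obtain ⟨z, hzV, hzD, hzy⟩ := (mem_closure_iff.1 (hE y hyE)) _ hV hyV
  exact ⟨z, hzV.1, hzD, hzV.2⟩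

/-- If a subset `A` of a Hausdorff space is the union of `N` discrete sets, then its
Cantor–Bendixson rank is at most `N`, i.e. the `N`-th Cantor–Bendixson derivative of `A`
is empty. -/
theorem stmt3 {T : Type u} [TopologicalSpace T] [T2Space T] (A : Set T) (N : ℕ)
    (f : Fin N → Set T) (hdisc : ∀ i, IsDiscreteSubset (f i)) (hA : A = ⋃ i, f i) :
    cbIter A (N : Ordinal.{u}) = ∅ := by
  -- main claim by induction
  have key : ∀ n : ℕ, cbIter A (n : Ordinal.{u}) ⊆
      {x | ∃ S : Finset (Fin N), S.card = n ∧ ∀ i ∈ S, x ∈ closure (f i \ {x})} := by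
    intro n
    induction n with
    | zero =>
      intro x _
      exact ⟨∅, rfl, fun i hi => absurd hi (Finset.notMem_empty i)⟩
    | succ n ih =>
      rw [cbIter_succ_nat]
      intro x hx
      obtain ⟨hxB, hxcl⟩ := hx
      set B := cbIter A (n : Ordinal.{u}) with hB
      have hBA : B ⊆ A := by
        have : ∀ m : ℕ, cbIter A (m : Ordinal.{u}) ⊆ A := by
          intro m
          induction m with
          | zero => rw [Nat.cast_zero, cbIter_zero]
          | succ m ihm =>
            rw [cbIter_succ_nat]
            exact fun y hy => ihm hy.1
        exact this n
      -- decompose B \ {x} into pieces indexed by (S, j)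
      have hdecomp : B \ {x} ⊆ ⋃ p : Finset (Fin N) × Fin N,
          {y ∈ B \ {x} | (p.1.card = n ∧ ∀ i ∈ p.1, y ∈ closure (f i \ {y})) ∧ y ∈ f p.2} := by
        intro y hy
        obtain ⟨S, hScard, hS⟩ := ih hy.1
        have hyA : y ∈ A := hBA hy.1
        rw [hA] at hyA
        obtain ⟨j, hj⟩ := Set.mem_iUnion.1 hyA
        exact Set.mem_iUnion.2 ⟨⟨S, j⟩, hy, ⟨hScard, hS⟩, hj⟩
      have hxcl' : x ∈ ⋃ p : Finset (Fin N) × Fin N,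
          closure {y ∈ B \ {x} | (p.1.card = n ∧ ∀ i ∈ p.1, y ∈ closure (f i \ {y})) ∧ y ∈ f p.2} := by
        rw [← closure_iUnion_of_finite]
        exact closure_mono hdecomp hxcl
      obtain ⟨⟨S, j⟩, hxC⟩ := Set.mem_iUnion.1 hxcl'
      set C := {y ∈ B \ {x} | (S.card = n ∧ ∀ i ∈ S, y ∈ closure (f i \ {y})) ∧ y ∈ f j}
        with hCdef
      -- C is nonempty
      obtain ⟨y₀, hy₀⟩ : C.Nonempty := by
        by_contra h
        rw [Set.not_nonempty_iff_eq_empty] at h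
        rw [h, closure_empty] at hxC
        exact hxC
      have hScard : S.card = n := hy₀.2.1.1
      -- points of C avoid f i for i ∈ S (discreteness)
      have hCavoid : ∀ i ∈ S, ∀ y ∈ C, y ∉ f i := by
        intro i hi y hy hyf
        exact hdisc i y hyf (hy.2.1.2 i hi)
      -- hence j ∉ S
      have hjS : j ∉ S := fun h => hCavoid j h y₀ hy₀ hy₀.2.2
      have hxnotC : x ∉ C := fun h => h.1.2 rfl
      refine ⟨insert j S, by rw [Finset.card_insert_of_notMem hjS, hScard], ?_⟩
      intro i hi
      rcases Finset.mem_insert.1 hi with h | h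
      · -- i = j : C ⊆ f j \ {x}
        subst h
        refine closure_mono ?_ hxC
        intro y hy
        exact ⟨hy.2.2, hy.1.2⟩
      · -- i ∈ S : use the T1 propagation lemma
        exact closure_trans_aux (E := C) hxnotC hxC (fun y hy => hy.2.1.2 i h)
  -- conclude
  ext x
  simp only [Set.mem_empty_iff_false, iff_false]
  intro hx
  obtain ⟨S, hScard, hS⟩ := key N hx
  have hSuniv : S = Finset.univ := Finset.eq_univ_of_card S (by simp [hScard])
  have hxA : x ∈ A := by
    have : ∀ m : ℕ, cbIter A (m : Ordinal.{u}) ⊆ A := by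
      intro m
      induction m with
      | zero => rw [Nat.cast_zero, cbIter_zero]
      | succ m ihm =>
        rw [cbIter_succ_nat]
        exact fun y hy => ihm hy.1
    exact this N hx
  rw [hA] at hxA
  obtain ⟨j, hj⟩ := Set.mem_iUnion.1 hxA
  exact hdisc j x hj (hS j (hSuniv ▸ Finset.mem_univ j))
end

section
/- Let X be a topological space. If X = X₁ ∪ … ∪ Xₙ with each Xᵢ closed in X, then the Pillay rank of X equals the maximum of the Pillay ranks of the Xᵢ. -/
/-- Auxiliary definition by well-founded recursion on ordinals. -/
noncomputable def PRankGeAux {X : Type u} [TopologicalSpace X] :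
    Ordinal.{u} → Set X → Prop :=
  WellFounded.fix Ordinal.lt_wf fun α ih S =>
    S.Nonempty ∧ ∀ β (h : β < α), ∃ Y : Set X, Y ⊆ S ∧ Y = closure Y ∩ S ∧
      (¬ ∃ U : Set X, IsOpen U ∧ (U ∩ S).Nonempty ∧ U ∩ S ⊆ closure Y) ∧ ih β h Y

/-- `PRankGe S α` expresses that the Pillay rank of the subset `S` (with its subspace
topology) is at least the ordinal `α`: `S` is nonempty, and for every `β < α` there is a
subset `Y ⊆ S` which is closed in `S` (i.e. `Y = closure Y ∩ S`), nowhere dense in `S`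
(no nonempty relatively open subset of `S` is contained in the closure of `Y`), and of
rank at least `β`. -/
noncomputable def PRankGe {X : Type u} [TopologicalSpace X] (S : Set X)
    (α : Ordinal.{u}) : Prop :=
  PRankGeAux α S


/-!
Rank passes up from a closed subset by monotonicity. For the converse, induct on `α`. Given a
closed nowhere dense `Z ⊆ S` of rank `≥ β`, cover `Z` by the frontiers of the traces `Z ∩ Tᵢ`
relative to the pieces `Tᵢ`: at a point of `Z` lying in none of them, `Z` contains a
neighbourhood of the point in every `Tᵢ`, hence in `S`, which nowhere density forbids. Each
relative frontier is closed nowhere dense in its `Tᵢ`, and by induction one of them has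
rank `≥ β`. As the lower sets `{β | Tᵢ has a witness of rank ≥ β}` are finitely many and linearly
ordered, one of them contains every `β < α`.
-/

universe u

open Set

theorem exists_forall_of_forall_exists_of_antitone {γ ι : Type*} [LinearOrder γ] [Finite ι]
    [Nonempty ι] {P : ι → γ → Prop} (hP : ∀ i, Antitone (P i)) {s : Set γ}
    (h : ∀ b ∈ s, ∃ i, P i b) : ∃ i, ∀ b ∈ s, P i b := by
  by_contra! H
  choose b hbs hnP using H
  obtain ⟨j, hj⟩ := Finite.exists_max b
  obtain ⟨k, hk⟩ := h (b j) (hbs j)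
  exact hnP k (hP k (hj k) hk)

variable {X : Type u} [TopologicalSpace X]

def IsClosedNowhereDenseIn (Y S : Set X) : Prop :=
  Y ⊆ S ∧ Y = closure Y ∩ S ∧ ¬ ∃ U : Set X, IsOpen U ∧ (U ∩ S).Nonempty ∧ U ∩ S ⊆ closure Y

theorem isClosedNowhereDenseIn_iff {Y S : Set X} (hY : IsClosed Y) :
    IsClosedNowhereDenseIn Y S ↔
      Y ⊆ S ∧ ¬ ∃ U : Set X, IsOpen U ∧ (U ∩ S).Nonempty ∧ U ∩ S ⊆ Y := by
  simp only [IsClosedNowhereDenseIn, hY.closure_eq, left_eq_inter]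
  tauto

theorem IsClosedNowhereDenseIn.isClosed {Y S : Set X} (h : IsClosedNowhereDenseIn Y S)
    (hS : IsClosed S) : IsClosed Y := by
  rw [h.2.1]
  exact isClosed_closure.inter hS

theorem IsClosedNowhereDenseIn.mono {Y T S : Set X} (h : IsClosedNowhereDenseIn Y T)
    (hT : IsClosed T) (hTS : T ⊆ S) : IsClosedNowhereDenseIn Y S := by
  have hY := h.isClosed hT
  rw [isClosedNowhereDenseIn_iff hY] at h ⊢
  obtain ⟨hYT, hnwd⟩ := h
  refine ⟨hYT.trans hTS, fun ⟨U, hU, ⟨x, hxU, hxS⟩, hUY⟩ => hnwd ⟨U, hU, ?_, ?_⟩⟩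
  · exact ⟨x, hxU, hYT (hUY ⟨hxU, hxS⟩)⟩
  · exact fun y hy => hUY ⟨hy.1, hTS hy.2⟩

/-- For closed `Z`, the frontier of `Z ∩ T` relative to the subspace `T`. -/
def relFrontier (T Z : Set X) : Set X :=
  (Z ∩ T) \ ⋃₀ {U | IsOpen U ∧ U ∩ T ⊆ Z}

theorem isClosed_relFrontier {T Z : Set X} (hT : IsClosed T) (hZ : IsClosed Z) :
    IsClosed (relFrontier T Z) :=
  (hZ.inter hT).sdiff (isOpen_sUnion fun _ hU => hU.1)

theorem isClosedNowhereDenseIn_relFrontier {T Z : Set X} (hT : IsClosed T) (hZ : IsClosed Z) :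
    IsClosedNowhereDenseIn (relFrontier T Z) T := by
  rw [isClosedNowhereDenseIn_iff (isClosed_relFrontier hT hZ)]
  refine ⟨fun x hx => hx.1.2, fun ⟨U, hU, ⟨x, hxU, hxT⟩, hUW⟩ => ?_⟩
  have hx : x ∈ relFrontier T Z := hUW ⟨hxU, hxT⟩
  exact hx.2 ⟨U, ⟨hU, fun y hy => (hUW hy).1.1⟩, hxU⟩

theorem IsClosedNowhereDenseIn.subset_iUnion_relFrontier {ι : Type*} [Finite ι] {Z S : Set X}
    {T : ι → Set X} (hZ : IsClosedNowhereDenseIn Z S) (hT : ∀ i, IsClosed (T i))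
    (hST : S ⊆ ⋃ i, T i) : Z ⊆ ⋃ i, relFrontier (T i) Z := by
  intro z hz
  rw [mem_iUnion]
  by_contra! hzW
  have hnbhd : ∀ i, ∃ U : Set X, IsOpen U ∧ z ∈ U ∧ U ∩ T i ⊆ Z := by
    intro i
    by_cases hzT : z ∈ T i
    · have hz' : z ∈ ⋃₀ {U | IsOpen U ∧ U ∩ T i ⊆ Z} := by
        by_contra hz'
        exact hzW i ⟨⟨hz, hzT⟩, hz'⟩
      obtain ⟨U, ⟨hU, hUZ⟩, hzU⟩ := hz'
      exact ⟨U, hU, hzU, hUZ⟩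
    · exact ⟨(T i)ᶜ, (hT i).isOpen_compl, hzT, by simp⟩
  choose U hU hzU hUZ using hnbhd
  refine hZ.2.2 ⟨⋂ i, U i, isOpen_iInter_of_finite hU, ⟨z, mem_iInter.2 hzU, hZ.1 hz⟩, ?_⟩
  rintro x ⟨hxU, hxS⟩
  obtain ⟨i, hxT⟩ := mem_iUnion.1 (hST hxS)
  exact subset_closure (hUZ i ⟨mem_iInter.1 hxU i, hxT⟩)

theorem pRankGe_iff (S : Set X) (α : Ordinal.{u}) :
    PRankGe S α ↔ S.Nonempty ∧
      ∀ β < α, ∃ Y, IsClosedNowhereDenseIn Y S ∧ PRankGe Y β := by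
  unfold PRankGe PRankGeAux
  rw [WellFounded.fix_eq]
  simp only [IsClosedNowhereDenseIn, and_assoc]

theorem PRankGe.nonempty {S : Set X} {α : Ordinal.{u}} (h : PRankGe S α) : S.Nonempty :=
  ((pRankGe_iff S α).1 h).1

theorem pRankGe_zero {S : Set X} : PRankGe S 0 ↔ S.Nonempty := by
  simp [pRankGe_iff S 0]

theorem pRankGe_iff_of_ne_zero {S : Set X} {α : Ordinal.{u}} (hα : α ≠ 0) :
    PRankGe S α ↔ ∀ β < α, ∃ Y, IsClosedNowhereDenseIn Y S ∧ PRankGe Y β := by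
  refine (pRankGe_iff S α).trans ⟨And.right, fun h => ⟨?_, h⟩⟩
  obtain ⟨Y, hY, hYr⟩ := h 0 (pos_iff_ne_zero.2 hα)
  exact hYr.nonempty.mono hY.1

theorem PRankGe.of_le {S : Set X} {α β : Ordinal.{u}} (h : PRankGe S α) (hβα : β ≤ α) :
    PRankGe S β := by
  rw [pRankGe_iff] at h ⊢
  exact ⟨h.1, fun γ hγ => h.2 γ (hγ.trans_le hβα)⟩

theorem PRankGe.mono {T S : Set X} {α : Ordinal.{u}} (h : PRankGe T α) (hT : IsClosed T)
    (hTS : T ⊆ S) : PRankGe S α := by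
  rw [pRankGe_iff] at h ⊢
  refine ⟨h.1.mono hTS, fun β hβ => ?_⟩
  obtain ⟨Y, hY, hYr⟩ := h.2 β hβ
  exact ⟨Y, hY.mono hT hTS, hYr⟩

theorem PRankGe.exists_of_subset_iUnion {ι : Type*} [Finite ι] {S : Set X} {α : Ordinal.{u}}
    (h : PRankGe S α) (hS : IsClosed S) {T : ι → Set X} (hT : ∀ i, IsClosed (T i))
    (hST : S ⊆ ⋃ i, T i) : ∃ i, PRankGe (T i) α := by
  induction α using WellFoundedLT.induction generalizing S T with | _ α IH => ?_
  obtain ⟨x, hxS⟩ := h.nonempty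
  obtain ⟨i₀, hxT⟩ := mem_iUnion.1 (hST hxS)
  rcases eq_or_ne α 0 with rfl | hα
  · exact ⟨i₀, pRankGe_zero.2 ⟨x, hxT⟩⟩
  have : Nonempty ι := ⟨i₀⟩
  simp_rw [pRankGe_iff_of_ne_zero hα] at h ⊢
  refine exists_forall_of_forall_exists_of_antitone (s := Iio α)
    (fun i β γ hβγ ⟨Y, hY, hYr⟩ => ⟨Y, hY, hYr.of_le hβγ⟩) fun β hβ => ?_
  obtain ⟨Z, hZ, hZr⟩ := h β hβ
  have hZc := hZ.isClosed hS
  obtain ⟨i, hi⟩ := IH β hβ hZr hZc (fun i => isClosed_relFrontier (hT i) hZc)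
    (hZ.subset_iUnion_relFrontier hT hST)
  exact ⟨i, _, isClosedNowhereDenseIn_relFrontier (hT i) hZc, hi⟩

/-- If the topological space `X` is the union of finitely many subsets `X₁, …, Xₙ`, each
closed in `X`, then the Pillay rank of `X` equals the maximum of the Pillay ranks of the
`Xᵢ`; equivalently, for every ordinal `α`, `RK(X) ≥ α` iff `RK(Xᵢ) ≥ α` for some `i`. -/
theorem stmt11 {X : Type u} [TopologicalSpace X] (n : ℕ) (Xs : Fin n → Set X)
    (hclosed : ∀ i, IsClosed (Xs i)) (hcover : ⋃ i, Xs i = Set.univ) :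
    ∀ α : Ordinal.{u}, PRankGe (Set.univ : Set X) α ↔ ∃ i, PRankGe (Xs i) α := fun _ =>
  ⟨fun h => h.exists_of_subset_iUnion isClosed_univ hclosed hcover.ge,
    fun ⟨i, hi⟩ => hi.mono (hclosed i) (subset_univ _)⟩
end
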